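/- arXiv:1605.09066 — 2 statements merged into one kernel-verified Lean document; each statement's English description precedes it below -/
import Mathlib

section
/- Suppose each φ_i : R^d → R is convex and L-smooth (i.e. ∇φ_i is L-Lipschitz), P(w) = (1/n)∑_{i=1}^n φ_i(w) + (λ/2)||w||^2, and w* is a minimizer of P. Then for every w, (1/n)∑_{i=1}^n ||∇φ_i(w) − ∇φ_i(w*)||^2 ≤ 2L (P(w) − P(w*) − (λ/2)||w − w*||^2). -/
/-!
Each `φ i` is convex and `L`-smooth, so its gradient is `1/L`-cocoercive in the Bregman form
`‖∇φ x - ∇φ y‖² ≤ 2L (φ x - φ y - ⟪∇φ y, x - y⟫)`: compare the quadratic upper bound at `x` with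
the tangent lower bound at `y` at the point `x - (∇φ x - ∇φ y) / L`. Averaging over `i` at
`(w, w*)`, the first-order optimality condition `(1/n) ∑ ∇φ i w* + λ w* = 0` turns the averaged
Bregman divergence into `P w - P w* - (λ/2) ‖w - w*‖²`.
-/

open Set
open scoped RealInnerProductSpace Gradient

variable {E : Type*} [NormedAddCommGroup E] [InnerProductSpace ℝ E] [CompleteSpace E] {f : E → ℝ}

theorem hasDerivAt_comp_add_smul (hf : Differentiable ℝ f) (x v : E) (t : ℝ) :
    HasDerivAt (fun s : ℝ => f (x + s • v)) ⟪∇ f (x + t • v), v⟫ t := by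
  have hline : HasDerivAt (fun s : ℝ => x + s • v) v t := by
    simpa using ((hasDerivAt_id t).smul_const v).const_add x
  rw [inner_gradient_left]
  exact (hf _).hasFDerivAt.comp_hasDerivAt t hline

theorem ConvexOn.add_inner_gradient_le (hconv : ConvexOn ℝ univ f) (hf : Differentiable ℝ f)
    (x y : E) : f x + ⟪∇ f x, y - x⟫ ≤ f y := by
  have hline : ConvexOn ℝ univ fun s : ℝ => f (x + s • (y - x)) := by
    simpa [Function.comp_def, AffineMap.lineMap_apply_module', add_comm] using
      hconv.comp_affineMap (AffineMap.lineMap x y)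
  have hderiv := hasDerivAt_comp_add_smul hf x (y - x) 0
  rw [zero_smul, add_zero] at hderiv
  have hslope := hline.le_slope_of_hasDerivAt (mem_univ 0) (mem_univ 1) one_pos hderiv
  simp only [slope_def_field, zero_smul, one_smul, add_zero, add_sub_cancel, sub_zero, div_one]
    at hslope
  linarith

theorem le_add_inner_gradient_add_sq {L : ℝ} (hf : Differentiable ℝ f)
    (hLip : ∀ a b, ‖∇ f a - ∇ f b‖ ≤ L * ‖a - b‖) (x y : E) :
    f y ≤ f x + ⟪∇ f x, y - x⟫ + L / 2 * ‖y - x‖ ^ 2 := by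
  set v := y - x
  -- the gap to the quadratic upper model decreases along the segment from `x` to `y`
  let g : ℝ → ℝ := fun t => f (x + t • v) - t * ⟪∇ f x, v⟫ - L / 2 * t ^ 2 * ‖v‖ ^ 2
  have hg : ∀ t, HasDerivAt g (⟪∇ f (x + t • v), v⟫ - ⟪∇ f x, v⟫ - L * t * ‖v‖ ^ 2) t := by
    intro t
    have hquad := ((hasDerivAt_pow 2 t).const_mul (L / 2)).mul_const (‖v‖ ^ 2)
    refine (((hasDerivAt_comp_add_smul hf x v t).fun_sub
      ((hasDerivAt_id' t).mul_const ⟪∇ f x, v⟫)).fun_sub hquad).congr_deriv ?_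
    simp only [Nat.cast_ofNat, one_mul, Nat.add_one_sub_one, pow_one]; ring
  have hanti : AntitoneOn g (Ici 0) := by
    refine antitoneOn_of_hasDerivWithinAt_nonpos (convex_Ici 0)
      (fun t _ => (hg t).continuousAt.continuousWithinAt) (fun t _ => (hg t).hasDerivWithinAt) ?_
    intro t ht
    rw [interior_Ici] at ht
    have hgrad : ‖∇ f (x + t • v) - ∇ f x‖ ≤ L * (t * ‖v‖) := by
      simpa [norm_smul, abs_of_pos (mem_Ioi.mp ht)] using hLip (x + t • v) x
    calc ⟪∇ f (x + t • v), v⟫ - ⟪∇ f x, v⟫ - L * t * ‖v‖ ^ 2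
        = ⟪∇ f (x + t • v) - ∇ f x, v⟫ - L * t * ‖v‖ ^ 2 := by rw [inner_sub_left]
      _ ≤ ‖∇ f (x + t • v) - ∇ f x‖ * ‖v‖ - L * t * ‖v‖ ^ 2 := by
        gcongr; exact real_inner_le_norm _ _
      _ ≤ L * (t * ‖v‖) * ‖v‖ - L * t * ‖v‖ ^ 2 := by gcongr
      _ = 0 := by ring
  have hg01 := hanti self_mem_Ici (show (0:ℝ) ≤ 1 by norm_num) zero_le_one
  simp only [g, v, zero_smul, one_smul, add_zero, add_sub_cancel, zero_mul, one_mul, sub_zero,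
    ne_eq, OfNat.ofNat_ne_zero, not_false_eq_true, zero_pow, one_pow, mul_zero] at hg01
  linarith

theorem ConvexOn.norm_sub_gradient_sq_le {L : ℝ} (hconv : ConvexOn ℝ univ f)
    (hf : Differentiable ℝ f) (hLip : ∀ a b, ‖∇ f a - ∇ f b‖ ≤ L * ‖a - b‖) (x y : E) :
    ‖∇ f x - ∇ f y‖ ^ 2 ≤ 2 * L * (f x - f y - ⟪∇ f y, x - y⟫) := by
  rcases le_or_gt L 0 with hL | hL
  · have hgrad : ∇ f x = ∇ f y := by
      rw [← sub_eq_zero, ← norm_le_zero_iff]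
      exact (hLip x y).trans (mul_nonpos_of_nonpos_of_nonneg hL (norm_nonneg _))
    have hxy := hconv.add_inner_gradient_le hf x y
    have hyx := hconv.add_inner_gradient_le hf y x
    rw [hgrad, ← neg_sub, inner_neg_right] at hxy
    rw [hgrad, sub_self, norm_zero]
    nlinarith
  · set g := ∇ f x - ∇ f y
    -- compare the upper model at `x` with the lower model at `y` at the point `x - g / L`
    set z := x - L⁻¹ • g
    have hupper := le_add_inner_gradient_add_sq hf hLip x z
    have hlower := hconv.add_inner_gradient_le hf y z
    have hzx : z - x = -(L⁻¹ • g) := by simp [z]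
    have hzy : z - y = (x - y) - L⁻¹ • g := by simp [z]; abel
    rw [hzx, norm_neg, norm_smul, Real.norm_of_nonneg (inv_nonneg.mpr hL.le), inner_neg_right,
      real_inner_smul_right] at hupper
    rw [hzy, inner_sub_right, real_inner_smul_right] at hlower
    have hg : ‖g‖ ^ 2 = ⟪∇ f x, g⟫ - ⟪∇ f y, g⟫ := by
      rw [← real_inner_self_eq_norm_sq, inner_sub_left]
    have key : L⁻¹ / 2 * ‖g‖ ^ 2 ≤ f x - f y - ⟪∇ f y, x - y⟫ := by
      have hsq : L * (L⁻¹ * ‖g‖) ^ 2 = L⁻¹ * ‖g‖ ^ 2 := by field_simp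
      linear_combination hupper + hlower + hsq / 2 + L⁻¹ * hg
    calc ‖g‖ ^ 2 = 2 * L * (L⁻¹ / 2 * ‖g‖ ^ 2) := by field_simp
      _ ≤ 2 * L * (f x - f y - ⟪∇ f y, x - y⟫) := by gcongr

theorem sum_inner_gradient_add_inner_eq_zero {ι : Type*} [Fintype ι] {φ : ι → E → ℝ}
    (hdiff : ∀ i, Differentiable ℝ (φ i)) {c lam : ℝ} {P : E → ℝ}
    (hP : ∀ w, P w = c * ∑ i, φ i w + lam / 2 * ‖w‖ ^ 2) {wstar : E}
    (hmin : ∀ w, P wstar ≤ P w) (u : E) :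
    c * ∑ i, ⟪∇ (φ i) wstar, u⟫ + lam * ⟪wstar, u⟫ = 0 := by
  have hline : HasDerivAt (fun t : ℝ => P (wstar + t • u))
      (c * ∑ i, ⟪∇ (φ i) wstar, u⟫ + lam / 2 * (2 * ⟪wstar, u⟫)) 0 := by
    have hsum := HasDerivAt.fun_sum (u := Finset.univ)
      fun i _ => hasDerivAt_comp_add_smul (hdiff i) wstar u 0
    have hsq := (((hasDerivAt_id (0 : ℝ)).smul_const u).const_add wstar).norm_sq
    simp only [zero_smul, add_zero, one_smul, id] at hsum hsq
    simp only [hP]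
    exact (hsum.const_mul c).add (hsq.const_mul (lam / 2))
  have hmin0 : IsLocalMin (fun t : ℝ => P (wstar + t • u)) 0 :=
    Filter.Eventually.of_forall fun t => by simpa using hmin (wstar + t • u)
  linear_combination hmin0.hasDerivAt_eq_zero hline

theorem stmt_2_general {d n : ℕ} (φ : Fin n → EuclideanSpace ℝ (Fin d) → ℝ)
    (L lam : ℝ)
    (hconv : ∀ i, ConvexOn ℝ Set.univ (φ i))
    (hdiff : ∀ i, Differentiable ℝ (φ i))
    (hLip : ∀ i, ∀ x y, ‖gradient (φ i) x - gradient (φ i) y‖ ≤ L * ‖x - y‖)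
    (P : EuclideanSpace ℝ (Fin d) → ℝ)
    (hP : ∀ w, P w = (1 / (n : ℝ)) * ∑ i, φ i w + lam / 2 * ‖w‖ ^ 2)
    (wstar : EuclideanSpace ℝ (Fin d)) (hmin : ∀ w, P wstar ≤ P w)
    (w : EuclideanSpace ℝ (Fin d)) :
    (1 / (n : ℝ)) * ∑ i, ‖gradient (φ i) w - gradient (φ i) wstar‖ ^ 2 ≤
      2 * L * (P w - P wstar - lam / 2 * ‖w - wstar‖ ^ 2) := by
  have hstat := sum_inner_gradient_add_inner_eq_zero hdiff hP hmin (w - wstar)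
  have hbregman : (1 / (n : ℝ)) * ∑ i, (φ i w - φ i wstar - ⟪∇ (φ i) wstar, w - wstar⟫) =
      P w - P wstar - lam / 2 * ‖w - wstar‖ ^ 2 := by
    rw [inner_sub_right, real_inner_self_eq_norm_sq, real_inner_comm] at hstat
    rw [hP, hP, Finset.sum_sub_distrib, Finset.sum_sub_distrib, norm_sub_sq_real]
    linear_combination -hstat
  calc (1 / (n : ℝ)) * ∑ i, ‖∇ (φ i) w - ∇ (φ i) wstar‖ ^ 2
      ≤ (1 / (n : ℝ)) * ∑ i, 2 * L * (φ i w - φ i wstar - ⟪∇ (φ i) wstar, w - wstar⟫) := by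
        gcongr with i
        exact (hconv i).norm_sub_gradient_sq_le (hdiff i) (hLip i) w wstar
    _ = 2 * L * (P w - P wstar - lam / 2 * ‖w - wstar‖ ^ 2) := by
        rw [← hbregman, ← Finset.mul_sum]; ring

theorem stmt_2 {d n : ℕ} (hn : 0 < n) (φ : Fin n → EuclideanSpace ℝ (Fin d) → ℝ)
    (L lam : ℝ) (hlam : 0 < lam)
    (hconv : ∀ i, ConvexOn ℝ Set.univ (φ i))
    (hdiff : ∀ i, Differentiable ℝ (φ i))
    (hLip : ∀ i, ∀ x y, ‖gradient (φ i) x - gradient (φ i) y‖ ≤ L * ‖x - y‖)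
    (P : EuclideanSpace ℝ (Fin d) → ℝ)
    (hP : ∀ w, P w = (1 / (n : ℝ)) * ∑ i, φ i w + lam / 2 * ‖w‖ ^ 2)
    (wstar : EuclideanSpace ℝ (Fin d)) (hmin : ∀ w, P wstar ≤ P w)
    (w : EuclideanSpace ℝ (Fin d)) :
    (1 / (n : ℝ)) * ∑ i, ‖gradient (φ i) w - gradient (φ i) wstar‖ ^ 2 ≤
      2 * L * (P w - P wstar - lam / 2 * ‖w - wstar‖ ^ 2) :=
  stmt_2_general φ L lam hconv hdiff hLip P hP wstar hmin w
end

section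
/- Let (C_t)_{t≥0} be a sequence of nonnegative reals and (V_t)_{t≥0} nonnegative reals satisfying C_{t+1} ≤ ρ C_t + a · ∑_{j=max(0,t−τ)}^{t−1} V_j − b · V_t for all 0 ≤ t ≤ T−1, where 0 < ρ < 1, a, b ≥ 0, and a·τ ≤ b. Then C_T ≤ ρ C_0. -/
open Finset

theorem stmt_10 (C V : ℕ → ℝ) (ρ a b : ℝ) (τ T : ℕ) (hT : 1 ≤ T)
    (hC : ∀ t, 0 ≤ C t) (hV : ∀ t, 0 ≤ V t)
    (hρ0 : 0 < ρ) (hρ1 : ρ < 1) (ha : 0 ≤ a) (hb : 0 ≤ b) (hab : a * (τ : ℝ) ≤ b)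
    (hrec : ∀ t < T,
      C (t + 1) ≤ ρ * C t + a * ∑ j ∈ Finset.Ico (t - τ) t, V j - b * V t) :
    C T ≤ ρ * C 0 := by
  set W : ℕ → ℝ := fun s => ∑ j ∈ Finset.Ico (s - τ) s, V j with hW
  -- main inductive bound
  have main : ∀ t, 1 ≤ t → t ≤ T →
      C t ≤ ρ * C 0 + a * ∑ s ∈ range t, W s - b * ∑ s ∈ range t, V s := by
    intro t
    induction t with
    | zero => omega
    | succ n ih =>
      intro _ hle
      rcases Nat.eq_zero_or_pos n with rfl | hn
      · have h := hrec 0 (by omega)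

        have hW0 : W 0 = 0 := by simp [hW]
        simp only [Finset.sum_range_succ, Finset.sum_range_zero, zero_add]
        linarith
      · have h1 := ih hn (by omega)
        have h2 := hrec n (by omega)
        have h3 : ρ * C n ≤ C n := by nlinarith [hC n]
        rw [Finset.sum_range_succ, Finset.sum_range_succ]
        have : C (n+1) ≤ C n + a * W n - b * V n := by linarith
        linarith
  have hmain := main T hT le_rfl
  -- combinatorial bound: ∑ W ≤ τ * ∑ V
  have hcomb : ∑ s ∈ range T, W s ≤ (τ : ℝ) * ∑ j ∈ range T, V j := by
    calc ∑ s ∈ range T, W s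
        ≤ ∑ s ∈ range T, ∑ j ∈ range T,
            if s - τ ≤ j ∧ j < s then V j else 0 := by
          apply Finset.sum_le_sum
          intro s hs
          rw [← Finset.sum_filter]
          apply Finset.sum_le_sum_of_subset_of_nonneg
          · intro j hj
            simp only [Finset.mem_Ico] at hj
            simp only [Finset.mem_filter, Finset.mem_range, Finset.mem_range] at hs ⊢
            exact ⟨by omega, hj.1, hj.2⟩
          · intro j _ _; exact hV j
      _ = ∑ j ∈ range T, ∑ s ∈ range T,
            if s - τ ≤ j ∧ j < s then V j else 0 := Finset.sum_comm
      _ ≤ ∑ j ∈ range T, (τ : ℝ) * V j := by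
          apply Finset.sum_le_sum
          intro j _
          rw [← Finset.sum_filter, Finset.sum_const, nsmul_eq_mul]
          have hcard : ((range T).filter fun s => s - τ ≤ j ∧ j < s).card ≤ τ := by
            have hsub : ((range T).filter fun s => s - τ ≤ j ∧ j < s)
                ⊆ Finset.Ioc j (j + τ) := by
              intro s hs
              simp only [Finset.mem_filter, Finset.mem_range] at hs
              simp only [Finset.mem_Ioc]
              omega
            calc _ ≤ (Finset.Ioc j (j + τ)).card := Finset.card_le_card hsub
              _ = τ := by simp
          have := hV j
          have : (((range T).filter fun s => s - τ ≤ j ∧ j < s).card : ℝ) ≤ (τ : ℝ) := by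
            exact_mod_cast hcard
          nlinarith [hV j]
      _ = (τ : ℝ) * ∑ j ∈ range T, V j := by rw [Finset.mul_sum]
  have hVsum : 0 ≤ ∑ j ∈ range T, V j := Finset.sum_nonneg fun j _ => hV j
  have : a * ∑ s ∈ range T, W s ≤ b * ∑ s ∈ range T, V s := by
    calc a * ∑ s ∈ range T, W s ≤ a * ((τ : ℝ) * ∑ j ∈ range T, V j) := by
          exact mul_le_mul_of_nonneg_left hcomb ha
      _ = (a * (τ : ℝ)) * ∑ j ∈ range T, V j := by ring
      _ ≤ b * ∑ j ∈ range T, V j := mul_le_mul_of_nonneg_right hab hVsum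
  linarith
end
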